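/- Let n ≥ 3 be odd and w > 0. Define F : {0,1}^n → ℝ by F(x) = w·Σ_{1≤j<k≤n} (1/4 − x_j x_k) + (w n/2)·Σ_{j=1}^{n} (x_j − 1/2) (the traceless classical cost function on the complete graph with uniform edge weight w and uniform chemical potential μ = wn/2). Then max_{x∈{0,1}^n} F(x) = w(n+1)/8 and min_{x∈{0,1}^n} F(x) = −w n(n+1)/8; in particular |min F| / max F = n. -/
import Mathlib


noncomputable section

lemma pair_sum (n : ℕ) (f : Fin n → ℝ) :
    2 * ∑ e ∈ Finset.univ.filter (fun e : Fin n × Fin n => e.1 < e.2), f e.1 * f e.2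
      + ∑ j, f j ^ 2 = (∑ j, f j) ^ 2 := by
  have h : (∑ j, f j) ^ 2 = ∑ e : Fin n × Fin n, f e.1 * f e.2 := by
    rw [sq, Finset.sum_mul_sum, ← Finset.univ_product_univ, Finset.sum_product]
  rw [h, ← Finset.sum_filter_add_sum_filter_not Finset.univ (fun e : Fin n × Fin n => e.1 < e.2)]
  have h2 : ∑ e ∈ Finset.univ.filter (fun e : Fin n × Fin n => ¬ e.1 < e.2), f e.1 * f e.2
      = ∑ e ∈ Finset.univ.filter (fun e : Fin n × Fin n => e.2 < e.1), f e.1 * f e.2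
        + ∑ j, f j ^ 2 := by
    rw [← Finset.sum_filter_add_sum_filter_not
      (Finset.univ.filter (fun e : Fin n × Fin n => ¬ e.1 < e.2)) (fun e => e.2 < e.1),
      Finset.filter_filter, Finset.filter_filter]
    congr 1
    · apply Finset.sum_congr _ (fun _ _ => rfl)
      apply Finset.filter_congr; intro e _
      simp only [and_iff_right_iff_imp]
      exact fun h' => asymm h'
    · have he : Finset.univ.filter (fun e : Fin n × Fin n => ¬ e.1 < e.2 ∧ ¬ e.2 < e.1)
          = Finset.univ.image (fun j : Fin n => (j, j)) := by
        ext e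
        simp only [Finset.mem_filter, Finset.mem_univ, true_and, Finset.mem_image]
        constructor
        · rintro ⟨h1, h2⟩
          exact ⟨e.1, by rw [Prod.ext_iff]; exact ⟨rfl, le_antisymm (not_lt.mp h2) (not_lt.mp h1)⟩⟩
        · rintro ⟨j, rfl⟩; simp
      rw [he, Finset.sum_image (by intro a _ b _ h; simpa using (Prod.ext_iff.mp h).1)]
      exact Finset.sum_congr rfl (fun j _ => (sq (f j)).symm)
  have h3 : ∑ e ∈ Finset.univ.filter (fun e : Fin n × Fin n => e.2 < e.1), f e.1 * f e.2
      = ∑ e ∈ Finset.univ.filter (fun e : Fin n × Fin n => e.1 < e.2), f e.1 * f e.2 := by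
    apply Finset.sum_nbij' (fun e => Prod.swap e) (fun e => Prod.swap e) <;>
      simp [mul_comm]
  rw [h2, h3]; ring

lemma binary_sum_sq (n : ℕ) (x : Fin n → ℝ) (hx : ∀ j, x j = 0 ∨ x j = 1) :
    ∑ j, x j ^ 2 = ∑ j, x j := by
  apply Finset.sum_congr rfl
  intro j _
  rcases hx j with h | h <;> rw [h] <;> ring

lemma F_eq (n : ℕ) (x : Fin n → ℝ) (hx : ∀ j, x j = 0 ∨ x j = 1) (w : ℝ) :
    w * ∑ e ∈ Finset.univ.filter (fun e : Fin n × Fin n => e.1 < e.2), (1/4 - x e.1 * x e.2)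
      + (w * n / 2) * ∑ j, (x j - 1/2)
    = w * (((n:ℝ)+1)/8 - (∑ j, x j - ((n:ℝ)+1)/2)^2 / 2) := by
  have hcard := pair_sum n (fun _ => (1:ℝ))
  simp only [one_mul, one_pow, Finset.sum_const, Finset.card_univ, Fintype.card_fin,
    nsmul_eq_mul, mul_one] at hcard
  have hprod := pair_sum n x
  have hsq := binary_sum_sq n x hx
  rw [hsq] at hprod
  have hsplit : ∑ e ∈ Finset.univ.filter (fun e : Fin n × Fin n => e.1 < e.2),
      (1/4 - x e.1 * x e.2)
      = ((Finset.univ.filter (fun e : Fin n × Fin n => e.1 < e.2)).card : ℝ) * (1/4)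
        - ∑ e ∈ Finset.univ.filter (fun e : Fin n × Fin n => e.1 < e.2), x e.1 * x e.2 := by
    rw [Finset.sum_sub_distrib, Finset.sum_const, nsmul_eq_mul]
  have hlin : ∑ j, (x j - 1/2) = (∑ j, x j) - (n:ℝ)/2 := by
    rw [Finset.sum_sub_distrib, Finset.sum_const, Finset.card_univ, Fintype.card_fin,
      nsmul_eq_mul]
    ring
  rw [hsplit, hlin]
  set c : ℝ := ((Finset.univ.filter (fun e : Fin n × Fin n => e.1 < e.2)).card : ℝ)
  set m : ℝ := ∑ j, x j
  set p : ℝ := ∑ e ∈ Finset.univ.filter (fun e : Fin n × Fin n => e.1 < e.2), x e.1 * x e.2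
  -- hcard : 2 * c + n = n^2  (check form); hprod : 2 * p + m = m ^ 2
  linear_combination (w/8) * hcard - (w/2) * hprod


/-- for the traceless classical cost function on the complete graph with
uniform edge weight `w > 0` and chemical potential `μ = wn/2` (`n ≥ 3` odd),
`max F = w(n+1)/8`, `min F = -wn(n+1)/8`, and `|min F| / max F = n`. -/
theorem complete_graph_min_max_ratio
    (n : ℕ) (hn : 3 ≤ n) (hodd : Odd n) (w : ℝ) (hw : 0 < w)
    (F : (Fin n → ℝ) → ℝ)
    (hF : ∀ x, F x =
        w * ∑ e ∈ Finset.univ.filter (fun e : Fin n × Fin n => e.1 < e.2),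
            (1/4 - x e.1 * x e.2)
        + (w * n / 2) * ∑ j, (x j - 1/2)) :
    IsGreatest {v : ℝ | ∃ x : Fin n → ℝ, (∀ j, x j = 0 ∨ x j = 1) ∧ v = F x}
      (w * (n + 1) / 8) ∧
    IsLeast {v : ℝ | ∃ x : Fin n → ℝ, (∀ j, x j = 0 ∨ x j = 1) ∧ v = F x}
      (-(w * n * (n + 1) / 8)) ∧
    |(-(w * n * (n + 1) / 8))| / (w * (n + 1) / 8) = n := by
  obtain ⟨k, hk⟩ := hodd
  have hFval : ∀ x : Fin n → ℝ, (∀ j, x j = 0 ∨ x j = 1) →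
      F x = w * (((n:ℝ)+1)/8 - (∑ j, x j - ((n:ℝ)+1)/2)^2 / 2) := by
    intro x hx
    rw [hF x, F_eq n x hx w]
  have hbound : ∀ x : Fin n → ℝ, (∀ j, x j = 0 ∨ x j = 1) →
      0 ≤ ∑ j, x j ∧ ∑ j, x j ≤ (n:ℝ) := by
    intro x hx
    constructor
    · apply Finset.sum_nonneg; intro j _; rcases hx j with h | h <;> rw [h] <;> norm_num
    · calc ∑ j, x j ≤ ∑ _j : Fin n, (1:ℝ) := by
            apply Finset.sum_le_sum; intro j _; rcases hx j with h | h <;> rw [h] <;> norm_num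
        _ = (n:ℝ) := by simp
  refine ⟨⟨?_, ?_⟩, ⟨?_, ?_⟩, ?_⟩
  · -- max achieved
    refine ⟨fun j => if (j:ℕ) ≤ k then 1 else 0, fun j => by by_cases h : (j:ℕ) ≤ k <;> simp [h], ?_⟩
    have hsum : ∑ j : Fin n, (if (j:ℕ) ≤ k then (1:ℝ) else 0) = (k:ℝ) + 1 := by
      rw [Fin.sum_univ_eq_sum_range (fun i => if i ≤ k then (1:ℝ) else 0)]
      have hkn : k + 1 ≤ n := by omega
      rw [Finset.range_eq_Ico, ← Finset.sum_Ico_consecutive _ (Nat.zero_le (k+1)) hkn]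
      have h1 : ∑ i ∈ Finset.Ico 0 (k+1), (if i ≤ k then (1:ℝ) else 0)
          = ∑ _i ∈ Finset.Ico 0 (k+1), (1:ℝ) := by
        apply Finset.sum_congr rfl; intro i hi
        simp only [Finset.mem_Ico] at hi
        simp [Nat.lt_succ_iff.mp hi.2]
      have h2 : ∑ i ∈ Finset.Ico (k+1) n, (if i ≤ k then (1:ℝ) else 0) = 0 := by
        apply Finset.sum_eq_zero; intro i hi
        simp only [Finset.mem_Ico] at hi
        simp [Nat.not_le.mpr (Nat.lt_of_succ_le hi.1)]
      rw [h1, h2, Finset.sum_const]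
      simp
    rw [hFval _ (fun j => by by_cases h : (j:ℕ) ≤ k <;> simp [h]), hsum]
    have hn' : (n:ℝ) = 2*k + 1 := by rw [hk]; push_cast; ring
    rw [hn']; ring
  · -- upper bound
    rintro v ⟨x, hx, rfl⟩
    rw [hFval x hx]
    nlinarith [sq_nonneg (∑ j, x j - ((n:ℝ)+1)/2), hw.le]
  · -- min achieved
    refine ⟨fun _ => 0, fun _ => Or.inl rfl, ?_⟩
    rw [hFval _ (fun _ => Or.inl rfl)]
    simp only [Finset.sum_const_zero]
    ring
  · -- lower bound
    rintro v ⟨x, hx, rfl⟩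
    rw [hFval x hx]
    obtain ⟨h0, h1⟩ := hbound x hx
    nlinarith [hw.le, mul_nonneg (mul_nonneg hw.le h0) (sub_nonneg.mpr h1)]
  · -- ratio
    have hpos : 0 < w * ((n:ℝ) + 1) / 8 := by positivity
    have habs : |(-(w * (n:ℝ) * ((n:ℝ) + 1) / 8))| = w * n * (n+1) / 8 := by
      rw [abs_neg, abs_of_nonneg (by positivity)]
    rw [habs, div_eq_iff (ne_of_gt hpos)]
    ring

end
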